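/- Let Δ ≥ 2 and let 𝒮 be a collection (with repetition allowed) of copies of the star K_{1,Δ} on a common vertex set V with |V| = n, where Δ + 1 ≤ n ≤ 2Δ - 2. Let C ⊆ V be the set of vertices that are centers of at least one star of 𝒮. If 𝒮 is rainbow K_{1,Δ}-free and |𝒮| = ⌊(n-1)²/4⌋, then: if n is odd, |C| = (n-1)/2, and if n is even, |C| = ⌊(n-1)/2⌋ or |C| = ⌈(n-1)/2⌉. -/

import Mathlib

/-- A copy of the star K_{1,Δ} on the vertex set `V`: a center together with
a set of `Δ` leaves not containing the center. -/
structure StarGraph (V : Type) (Δ : ℕ) where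
  center : V
  leaves : Finset V
  card_leaves : leaves.card = Δ
  center_not_mem : center ∉ leaves

/-- `x` and `y` are adjacent in the star `S`. -/
def StarGraph.Adj {V : Type} {Δ : ℕ} (S : StarGraph V Δ) (x y : V) : Prop :=
  (x = S.center ∧ y ∈ S.leaves) ∨ (y = S.center ∧ x ∈ S.leaves)

/-- The collection `S` has a rainbow star with center `u` and leaf set `L`:
there is an injective (on `L`) assignment of the leaves to members of the
collection such that each edge from `u` to a leaf lies in the assigned star. -/
def IsRainbowStarAt {V : Type} {Δ t : ℕ} (S : Fin t → StarGraph V Δ) (u : V) (L : Finset V) : Prop :=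
  u ∉ L ∧ ∃ g : V → Fin t, Set.InjOn g ↑L ∧ ∀ l ∈ L, (S (g l)).Adj u l

/-- The collection `S` contains a rainbow `K_{1,Δ}`. -/
def HasRainbowStar {V : Type} {Δ t : ℕ} (S : Fin t → StarGraph V Δ) : Prop :=
  ∃ (u : V) (L : Finset V), L.card = Δ ∧ IsRainbowStarAt S u L


/-- The number of stars of the collection `S` with center `u` (this is `|𝒮_u|`). -/
noncomputable def centerCount {V : Type} {Δ t : ℕ} (S : Fin t → StarGraph V Δ) (u : V) : ℕ :=
  {i : Fin t | (S i).center = u}.ncard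

/-- The in-degree `d⁻(u)`: the number of vertices `x ≠ u` such that `u` is a leaf of
some star of the collection with center `x`. -/
noncomputable def inDeg {V : Type} {Δ t : ℕ} (S : Fin t → StarGraph V Δ) (u : V) : ℕ :=
  {x : V | x ≠ u ∧ ∃ i, (S i).center = x ∧ u ∈ (S i).leaves}.ncard

/-- The set of vertices that are centers of at least one star of the collection. -/
def centers {V : Type} {Δ t : ℕ} (S : Fin t → StarGraph V Δ) : Set V :=
  {u : V | ∃ i, (S i).center = u}

/-!
Let `C` be the set of centers, `k = |C|`. Rainbow-freeness forces, for every center `u`,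
`|𝒮_u| + d⁻(u) ≤ Δ - 1`: otherwise the stars at `u` together with the in-neighbours of `u`
assemble into a rainbow `K_{1,Δ}`. Summing over `C` gives `|𝒮| + e(C) + k ≤ kΔ`, where `e(C)`
counts center-to-center arcs. Every center has a star with at least `Δ - (n - k)` leaves
in `C`, so `kΔ ≤ e(C) + k(n - k)`. Hence `|𝒮| ≤ k(n - 1 - k)`, and `|𝒮| = ⌊(n-1)²/4⌋`
forces `(n - 1 - 2k)² ≤ 3`.
-/

theorem Finset.exists_injective_mem_of_card_le {ι α : Type*} [Fintype ι] [DecidableEq α]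
    (s : ι → Finset α) (hs : ∀ i, Fintype.card ι ≤ (s i).card) :
    ∃ f : ι → α, Function.Injective f ∧ ∀ i, f i ∈ s i := by
  refine (Finset.all_card_le_biUnion_card_iff_exists_injective s).1 fun I => ?_
  obtain rfl | ⟨i, hi⟩ := I.eq_empty_or_nonempty
  · simp
  · exact I.card_le_univ.trans <| (hs i).trans <|
      Finset.card_le_card <| Finset.subset_biUnion_of_mem s hi

theorem StarGraph.Adj.ne {V : Type} {Δ : ℕ} {S : StarGraph V Δ} {x y : V} (h : S.Adj x y) :
    x ≠ y := by
  rintro rfl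
  rcases h with ⟨rfl, hx⟩ | ⟨rfl, hx⟩ <;> exact S.center_not_mem hx

section Rainbow

variable {V : Type} {Δ t : ℕ} (S : Fin t → StarGraph V Δ)

theorem hasRainbowStar_of_injective [Nonempty (Fin t)] {ι : Type*} [Fintype ι] (u : V)
    (leaf : ι → V) (colour : ι → Fin t) (hleaf : Function.Injective leaf)
    (hcolour : Function.Injective colour) (hadj : ∀ j, (S (colour j)).Adj u (leaf j))
    (hcard : Fintype.card ι = Δ) : HasRainbowStar S := by
  classical
  set g := Function.extend leaf colour fun _ => Classical.arbitrary (Fin t)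
  have hg : ∀ j, g (leaf j) = colour j := hleaf.extend_apply _ _
  refine ⟨u, Finset.univ.image leaf, ?_, ?_, g, ?_, ?_⟩
  · rw [Finset.card_image_of_injective _ hleaf, Finset.card_univ, hcard]
  · simp only [Finset.mem_image, Finset.mem_univ, true_and, not_exists]
    exact fun j h => (hadj j).ne h.symm
  · simp only [Finset.coe_image, Finset.coe_univ, Set.image_univ]
    rintro _ ⟨a, rfl⟩ _ ⟨b, rfl⟩ hab
    rw [hg, hg] at hab
    rw [hcolour hab]
  · simp only [Finset.mem_image, Finset.mem_univ, true_and]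
    rintro _ ⟨j, rfl⟩
    rw [hg]
    exact hadj j

/-- The digraph whose in-degree is `inDeg`. -/
def StarArc (x u : V) : Prop :=
  x ≠ u ∧ ∃ i, (S i).center = x ∧ u ∈ (S i).leaves

theorem centerCount_eq_card [DecidableEq V] (u : V) :
    centerCount S u = (Finset.univ.filter fun i => (S i).center = u).card := by
  rw [centerCount, ← Set.ncard_coe_finset, Finset.coe_filter_univ]

variable [Fintype V]

theorem inDeg_eq_card (u : V) [DecidablePred (StarArc S · u)] :
    inDeg S u = (Finset.univ.filter (StarArc S · u)).card := by
  rw [inDeg, ← Set.ncard_coe_finset, Finset.coe_filter_univ]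
  rfl

theorem centerCount_add_inDeg_lt (hfree : ¬ HasRainbowStar S) {u : V} (hu : u ∈ centers S) :
    centerCount S u + inDeg S u < Δ := by
  classical
  obtain ⟨i₀, -⟩ := hu
  have : Nonempty (Fin t) := ⟨i₀⟩
  rw [centerCount_eq_card, inDeg_eq_card]
  set B := Finset.univ.filter fun i => (S i).center = u
  set A := Finset.univ.filter (StarArc S · u)
  by_contra! h
  -- Use `A' ⊆ A` as leaves, each coloured by a star centered there, and complete them by
  -- distinct leaves outside `A'` of the stars `B' ⊆ B` centered at `u` (Hall's theorem).
  obtain ⟨A', hA'A, hA'⟩ := Finset.exists_subset_card_eq (min_le_left A.card Δ)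
  obtain ⟨B', hB'B, hB'⟩ := Finset.exists_subset_card_eq (show Δ - A'.card ≤ B.card by omega)
  have hB'u : ∀ i ∈ B', (S i).center = u := fun i hi => (Finset.mem_filter.1 (hB'B hi)).2
  obtain ⟨φ, hφ, hφmem⟩ := Finset.exists_injective_mem_of_card_le
    (fun i : B' => (S i).leaves \ A') fun i => by
      have := Finset.le_card_sdiff A' (S i).leaves
      rw [(S i).card_leaves] at this
      rw [Fintype.card_coe]
      omega
  have harc : ∀ x : A', StarArc S x u := fun x => (Finset.mem_filter.1 (hA'A x.2)).2
  choose σ hσ using fun x : A' => (harc x).2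
  refine hfree (hasRainbowStar_of_injective S u (Sum.elim (↑) φ) (Sum.elim σ (↑)) ?_ ?_ ?_ ?_)
  · refine Subtype.val_injective.sumElim hφ fun x i hxi => ?_
    exact (Finset.mem_sdiff.1 (hφmem i)).2 (hxi ▸ x.2)
  · refine Function.Injective.sumElim (fun x y hxy => ?_) Subtype.val_injective fun x i hxi => ?_
    · exact Subtype.val_injective <| (hσ x).1.symm.trans <| hxy ▸ (hσ y).1
    · exact (harc x).1 <| (hσ x).1.symm.trans <| hxi ▸ hB'u i i.2
  · rintro (x | i)
    · exact Or.inr ⟨(hσ x).1.symm, (hσ x).2⟩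
    · exact Or.inl ⟨(hB'u i i.2).symm, (Finset.mem_sdiff.1 (hφmem i)).1⟩
  · rw [Fintype.card_sum, Fintype.card_coe, Fintype.card_coe]
    omega

end Rainbow
section Counting

variable {V : Type} {Δ t : ℕ} (S : Fin t → StarGraph V Δ) [Fintype (centers S)]

theorem sum_centerCount_centers [DecidableEq V] :
    ∑ u ∈ (centers S).toFinset, centerCount S u = t := by
  simp_rw [centerCount_eq_card]
  rw [← Finset.card_eq_sum_card_fiberwise (f := fun i => (S i).center)
      fun i _ => Set.mem_toFinset.2 (show (S i).center ∈ centers S from ⟨i, rfl⟩),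
    Finset.card_univ, Fintype.card_fin]

variable [Fintype V]

theorem sum_inDeg_centers [DecidableRel (StarArc S)] :
    ∑ u ∈ (centers S).toFinset, inDeg S u =
      ∑ x ∈ (centers S).toFinset, ((centers S).toFinset.filter (StarArc S x)).card := by
  refine (Finset.sum_congr rfl fun u _ => ?_).trans
    (Finset.sum_card_bipartiteAbove_eq_sum_card_bipartiteBelow (StarArc S)).symm
  rw [inDeg_eq_card, Finset.bipartiteBelow]
  congr 1
  ext x
  simp only [Finset.mem_filter, Finset.mem_univ, true_and, Set.mem_toFinset]
  exact ⟨fun h => ⟨h.2.imp fun _ hi => hi.1, h⟩, And.right⟩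

theorem le_card_filter_starArc_add [DecidableRel (StarArc S)] {x : V} (hx : x ∈ centers S) :
    Δ ≤ ((centers S).toFinset.filter (StarArc S x)).card
      + (Fintype.card V - (centers S).toFinset.card) := by
  classical
  obtain ⟨i, rfl⟩ := hx
  have hin : (S i).leaves ∩ (centers S).toFinset ⊆
      (centers S).toFinset.filter (StarArc S (S i).center) := fun u hu => by
      obtain ⟨hl, hc⟩ := Finset.mem_inter.1 hu
      exact Finset.mem_filter.2 ⟨hc, fun h => (S i).center_not_mem (h ▸ hl), i, rfl, hl⟩
  have hout : (S i).leaves \ (centers S).toFinset ⊆ (centers S).toFinsetᶜ :=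
    fun u hu => Finset.mem_compl.2 (Finset.mem_sdiff.1 hu).2
  have hsplit := Finset.card_inter_add_card_sdiff (S i).leaves (centers S).toFinset
  have hC := Finset.card_le_card hin
  have hCc := (Finset.card_le_card hout).trans_eq (Finset.card_compl _)
  rw [(S i).card_leaves] at hsplit
  omega

omit [Fintype (centers S)] in
theorem add_ncard_centers_le (hfree : ¬ HasRainbowStar S) :
    t + (centers S).ncard ≤ (centers S).ncard * (Fintype.card V - (centers S).ncard) := by
  classical
  rw [Set.ncard_eq_toFinset_card']
  have hin := Finset.sum_le_sum fun u hu =>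
    Nat.add_one_le_of_lt (centerCount_add_inDeg_lt S hfree (Set.mem_toFinset.1 hu))
  have hout := Finset.sum_le_sum fun x hx =>
    le_card_filter_starArc_add S (Set.mem_toFinset.1 hx)
  simp only [Finset.sum_add_distrib, Finset.sum_const, smul_eq_mul] at hin hout
  rw [sum_centerCount_centers, sum_inDeg_centers] at hin
  omega

end Counting

theorem eq_half_or_of_sq_div_four_add_le {n k : ℕ} (h : (n - 1) ^ 2 / 4 + k ≤ k * (n - k)) :
    k = (n - 1) / 2 ∨ k = n / 2 := by
  obtain _ | m := n
  · simp at h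
    omega
  have hk : k ≤ m := by
    by_contra! hk
    rw [Nat.sub_eq_zero_of_le hk] at h
    omega
  obtain ⟨j, rfl⟩ := Nat.exists_eq_add_of_le hk
  rw [Nat.add_sub_cancel, show k + j + 1 - k = j + 1 by omega] at h
  have h4 := Nat.div_add_mod ((k + j) ^ 2) 4
  have hr := Nat.mod_lt ((k + j) ^ 2) (by norm_num : 0 < 4)
  -- With `n - 1 = k + j`, `h` amounts to `(j - k)² ≤ 3`.
  have hjk : (j : ℤ) ≤ k + 1 ∧ (k : ℤ) ≤ j + 1 := by
    constructor <;> nlinarith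
  omega

theorem centers_card_extremal_small_n_general {V : Type} [Fintype V]
    (Δ n t : ℕ)
    (hcard : Fintype.card V = n)
    (S : Fin t → StarGraph V Δ) (hfree : ¬ HasRainbowStar S)
    (hsize : t = (n - 1) ^ 2 / 4) :
    (Odd n → (centers S).ncard = (n - 1) / 2) ∧
    (Even n → (centers S).ncard = (n - 1) / 2 ∨ (centers S).ncard = n / 2) := by
  have h := add_ncard_centers_le S hfree
  rw [hcard] at h
  obtain hk | hk := eq_half_or_of_sq_div_four_add_le (n := n) (by rwa [← hsize])
  · exact ⟨fun _ => hk, fun _ => Or.inl hk⟩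
  · exact ⟨fun ⟨m, hm⟩ => by omega, fun _ => Or.inr hk⟩

theorem centers_card_extremal_small_n {V : Type} [Fintype V]
    (Δ n t : ℕ) (hΔ : 2 ≤ Δ)
    (hcard : Fintype.card V = n)
    (hn₁ : Δ + 1 ≤ n) (hn₂ : n ≤ 2 * Δ - 2)
    (S : Fin t → StarGraph V Δ) (hfree : ¬ HasRainbowStar S)
    (hsize : t = (n - 1) ^ 2 / 4) :
    (Odd n → (centers S).ncard = (n - 1) / 2) ∧
    (Even n → (centers S).ncard = (n - 1) / 2 ∨ (centers S).ncard = n / 2) :=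
  centers_card_extremal_small_n_general Δ n t hcard S hfree hsize
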